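/- Let (E, d, ∧) be a rooftop metric space and let (x_j) be a Cauchy sequence with d(x_j, x_{j+1}) ≤ 2^{-j} for all j ≥ 1. For j, k ≥ 1 set y_j^k := x_k ∧ x_{k+1} ∧ ⋯ ∧ x_{k+j}. Then for each k, the sequence (y_j^k)_j is decreasing in the rooftop order and satisfies d(y_j^k, y_{j+1}^k) ≤ 2^{-k-j}; in particular (y_j^k)_j is a decreasing Cauchy sequence. -/
import Mathlib


structure Rooftop (E : Type*) [MetricSpace E] where
  wedge : E → E → E
  comm : ∀ x y, wedge x y = wedge y x
  assoc : ∀ x y z, wedge (wedge x y) z = wedge x (wedge y z)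
  idem : ∀ x, wedge x x = x
  dist_wedge_le : ∀ x y z, dist (wedge x z) (wedge y z) ≤ dist x y

/-- `iterWedge w x k j = x k ∧ x (k+1) ∧ ⋯ ∧ x (k+j)`. -/
def iterWedge {E : Type*} (w : E → E → E) (x : ℕ → E) (k : ℕ) : ℕ → E
  | 0 => x k
  | j + 1 => w (iterWedge w x k j) (x (k + j + 1))

private lemma dist_self_wedge {E : Type*} [MetricSpace E] (R : Rooftop E) (b c : E) :
    dist b (R.wedge b c) ≤ dist b c := by
  calc dist b (R.wedge b c) = dist (R.wedge b b) (R.wedge c b) := by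
        rw [R.idem, R.comm b c]
    _ ≤ dist b c := R.dist_wedge_le _ _ _

/-- For a Cauchy sequence with `d(x_j, x_{j+1}) ≤ 2^{-j}` (j ≥ 1), the sequence
`y_j^k = x_k ∧ ⋯ ∧ x_{k+j}` is decreasing in the rooftop order, satisfies
`d(y_j^k, y_{j+1}^k) ≤ 2^{-(k+j)}`, and in particular is a decreasing Cauchy sequence. -/
theorem rooftop_iterWedge_dec_cauchy {E : Type*} [MetricSpace E] (R : Rooftop E)
    (x : ℕ → E) (hx : CauchySeq x)
    (hd : ∀ j : ℕ, 1 ≤ j → dist (x j) (x (j + 1)) ≤ (2 : ℝ)⁻¹ ^ j)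
    (k : ℕ) (hk : 1 ≤ k) :
    (∀ j, R.wedge (iterWedge R.wedge x k (j + 1)) (iterWedge R.wedge x k j) =
        iterWedge R.wedge x k (j + 1)) ∧
    (∀ j, dist (iterWedge R.wedge x k j) (iterWedge R.wedge x k (j + 1)) ≤
        (2 : ℝ)⁻¹ ^ (k + j)) ∧
    CauchySeq (fun j => iterWedge R.wedge x k j) := by
  set y := iterWedge R.wedge x k with hy
  have hdec : ∀ j, R.wedge (y (j + 1)) (y j) = y (j + 1) := by
    intro j
    show R.wedge (R.wedge (y j) (x (k + j + 1))) (y j) = R.wedge (y j) (x (k + j + 1))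
    rw [R.comm (y j) (x (k + j + 1)), R.assoc, R.idem]
  have hstep : ∀ j, dist (y j) (y (j + 1)) ≤ dist (x (k + j)) (x (k + j + 1)) := by
    intro j
    cases j with
    | zero =>
        show dist (x k) (R.wedge (x k) (x (k + 0 + 1))) ≤ _
        simpa using dist_self_wedge R (x k) (x (k + 1))
    | succ m =>
        have e1 : y (m + 1) = R.wedge (x (k + m + 1)) (y m) := by
          rw [R.comm]; rfl
        have e2 : y (m + 2) = R.wedge (R.wedge (x (k + m + 1)) (x (k + m + 2))) (y m) := by
          show R.wedge (R.wedge (y m) (x (k + m + 1))) (x (k + m + 1 + 1)) = _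
          rw [R.comm (y m) (x (k + m + 1)), R.assoc, R.comm (y m) (x (k + m + 1 + 1)),
            ← R.assoc]
        rw [e1, e2]
        calc dist (R.wedge (x (k + m + 1)) (y m))
              (R.wedge (R.wedge (x (k + m + 1)) (x (k + m + 2))) (y m))
            ≤ dist (x (k + m + 1)) (R.wedge (x (k + m + 1)) (x (k + m + 2))) :=
              R.dist_wedge_le _ _ _
          _ ≤ dist (x (k + m + 1)) (x (k + m + 2)) := dist_self_wedge R _ _
          _ = dist (x (k + (m + 1))) (x (k + (m + 1) + 1)) := by ring_nf
  have hdist : ∀ j, dist (y j) (y (j + 1)) ≤ (2 : ℝ)⁻¹ ^ (k + j) := by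
    intro j
    exact (hstep j).trans (hd (k + j) (le_trans hk (Nat.le_add_right k j)))
  refine ⟨hdec, hdist, ?_⟩
  apply cauchySeq_of_le_geometric (2 : ℝ)⁻¹ ((2 : ℝ)⁻¹ ^ k) (by norm_num)
  intro n
  calc dist (y n) (y (n + 1)) ≤ (2 : ℝ)⁻¹ ^ (k + n) := hdist n
    _ = (2 : ℝ)⁻¹ ^ k * (2 : ℝ)⁻¹ ^ n := pow_add _ _ _
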